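/- Let A be an A_∞-algebra, V a dg vector space, and suppose (A, V) carries an (hsc₁)_∞-algebra structure given by a Maurer–Cartan element φ = (φ_cl, φ_op), where φ_cl is the A_∞-structure on A and sφ_op = F is an A_∞-morphism from A to End^+(V). Then the deformation complex Def(A,V), with differential δ_φ = [d + φ, −], is isomorphic as a chain complex to the mapping cone of the chain map F̂: (C̄H(A;A), d_H) → (C̄H(A, End^+(V)), d_H) sending ψ_cl to F ∘ ψ_cl. -/
import Mathlib


variable {k Pc Po : Type*} [Field k]
  [AddCommGroup Pc] [Module k Pc] [AddCommGroup Po] [Module k Po]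

/-- The product `⊙` of the deformation complex `Def(A,V) = D_cl × D_op`. -/
def odot (cc : Pc →ₗ[k] Pc →ₗ[k] Pc) (oc : Po →ₗ[k] Pc →ₗ[k] Po)
    (oo : Po →ₗ[k] Po →ₗ[k] Po) (x y : Pc × Po) : Pc × Po :=
  (cc x.1 y.1, oc x.2 y.1 + oo x.2 y.2)

/-- The (twisted Gerstenhaber) differential `d_H` on the reduced Hochschild complex
`C̄H(A;A) = Hom(T̄^c(sA), sA)`, where `eC = d_{sA} + φ_cl`. -/
def dHcl (cc : Pc →ₗ[k] Pc →ₗ[k] Pc) (eC : Pc) (m : ℤ) (x : Pc) : Pc :=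
  cc eC x - (-1 : k) ^ m • cc x eC

/-- The differential `d_H` of the Hochschild complex with coefficients
`C̄H(A, End⁺(V)) = Hom(T^c(sA), End⁺(V))`, where `eO = d_{End⁺(V)} + φ_op`
(convolution terms) and `eC = d_{sA} + φ_cl`. -/
def dHop (oc : Po →ₗ[k] Pc →ₗ[k] Po) (oo : Po →ₗ[k] Po →ₗ[k] Po)
    (eC : Pc) (eO : Po) (m : ℤ) (α : Po) : Po :=
  -(oo eO α) + (-1 : k) ^ m • (oc α eC + oo α eO)

lemma sign_neg' (m : ℤ) : (-1 : k) ^ (-m) = (-1 : k) ^ m := by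
  rw [zpow_neg, ← inv_zpow, inv_neg, inv_one]

lemma sign_sq' (m : ℤ) : (-1 : k) ^ m * (-1 : k) ^ m = 1 := by
  rw [← zpow_add₀ (by norm_num : (-1:k) ≠ 0), ← two_mul, zpow_mul]
  norm_num

lemma sign_sub_one' (m : ℤ) : (-1 : k) ^ (m - 1) = -(-1 : k) ^ m := by
  rw [zpow_sub₀ (by norm_num : (-1:k) ≠ 0)]
  field_simp

lemma cancel_two' {M : Type*} [CharZero k] [AddCommGroup M] [Module k M]
    {a : M} (h : a = -a) : a = 0 := by
  have h2 : (2:k) • a = 0 := by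
    rw [two_smul]; nth_rewrite 1 [h]; exact neg_add_cancel a
  rcases smul_eq_zero.mp h2 with h | h
  · exact absurd h two_ne_zero
  · exact h

/-- Let `(A, V)` be an `(hsc₁)_∞`-algebra, i.e. a Maurer–Cartan element
`e = (eC, eO)` (combining the differentials and `(φ_cl, φ_op)`, so that
`sφ_op = F` is an `A_∞`-morphism `A → End⁺(V)`) in the graded pre-Lie algebra
`Def(A,V) = D_cl × D_op` with product `⊙`.  Then the deformation complex
`(Def(A,V), δ_φ = [e, −])` is (isomorphic to) the mapping cone of the chain map
`F̂ : (C̄H(A;A), d_H) → (C̄H(A, End⁺(V)), d_H)`, `ψ_cl ↦ F∘ψ_cl = oc eO ψ_cl`: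
(a) `d_H` squares to zero on the closed part, (b) `d_H` squares to zero on the open
part, (c) `F̂` is a chain map, and (d) the differential `δ_φ = [e,−]` is exactly the
cone differential `(ψ_cl, ψ_op) ↦ (d_H ψ_cl, −d_H ψ_op + F̂ ψ_cl)`. -/
theorem deformation_complex_is_mapping_cone [CharZero k]
    (Acl : ℤ → Submodule k Pc) (Aop : ℤ → Submodule k Po)
    (cc : Pc →ₗ[k] Pc →ₗ[k] Pc) (oc : Po →ₗ[k] Pc →ₗ[k] Po)
    (oo : Po →ₗ[k] Po →ₗ[k] Po)
    (hcc : ∀ (m n : ℤ) x y, x ∈ Acl m → y ∈ Acl n → cc x y ∈ Acl (m + n))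
    (hoc : ∀ (m n : ℤ) α a, α ∈ Aop m → a ∈ Acl n → oc α a ∈ Aop (m + n))
    (hoo : ∀ (m n : ℤ) α β, α ∈ Aop m → β ∈ Aop n → oo α β ∈ Aop (m + n))
    (hpre_cl : ∀ (m n p : ℤ) (x y z : Pc), x ∈ Acl m → y ∈ Acl n → z ∈ Acl p →
      cc (cc x y) z - cc x (cc y z)
        = (-1 : k) ^ (n * p) • (cc (cc x z) y - cc x (cc z y)))
    (hpre_act : ∀ (m n p : ℤ) (α : Po) (a b : Pc), α ∈ Aop m → a ∈ Acl n → b ∈ Acl p →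
      oc (oc α a) b - oc α (cc a b)
        = (-1 : k) ^ (n * p) • (oc (oc α b) a - oc α (cc b a)))
    (hassoc : ∀ α β γ : Po, oo (oo α β) γ = oo α (oo β γ))
    (hcompat : ∀ (m n p : ℤ) (α β : Po) (a : Pc), α ∈ Aop m → β ∈ Aop n → a ∈ Acl p →
      oc (oo α β) a = (-1 : k) ^ (p * n) • oo (oc α a) β + oo α (oc β a))
    -- the `(hsc₁)_∞`-structure (Maurer–Cartan element, including the differentials):
    (eC : Pc) (heC : eC ∈ Acl (-1)) (eO : Po) (heO : eO ∈ Aop (-1))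
    (hMCc : cc eC eC = 0) (hMCo : oc eO eC + oo eO eO = 0) :
    -- (a) the differential of `C̄H(A;A)` squares to zero
    (∀ (m : ℤ) (x : Pc), x ∈ Acl m →
      dHcl cc eC (m - 1) (dHcl cc eC m x) = 0) ∧
    -- (b) the differential of `C̄H(A, End⁺(V))` squares to zero
    (∀ (m : ℤ) (α : Po), α ∈ Aop m →
      dHop oc oo eC eO (m - 1) (dHop oc oo eC eO m α) = 0) ∧
    -- (c) `F̂ : ψ_cl ↦ F∘ψ_cl` is a chain map
    (∀ (m : ℤ) (x : Pc), x ∈ Acl m →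
      oc eO (dHcl cc eC m x) = dHop oc oo eC eO (m - 1) (oc eO x)) ∧
    -- (d) `δ_φ = [e, −]` is the mapping-cone differential of `F̂`
    (∀ (m : ℤ) (ψ : Pc × Po), ψ.1 ∈ Acl m → ψ.2 ∈ Aop m →
      odot cc oc oo (eC, eO) ψ - (-1 : k) ^ m • odot cc oc oo ψ (eC, eO)
        = (dHcl cc eC m ψ.1, -(dHop oc oo eC eO m ψ.2) + oc eO ψ.1)) := by
  have e4 : oo eO eO = -(oc eO eC) := by
    rw [eq_neg_iff_add_eq_zero, add_comm]; exact hMCo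
  refine ⟨?_, ?_, ?_, ?_⟩
  · -- (a)
    intro m x hx
    set s : k := (-1:k)^m with hs
    have h1 := hpre_cl (-1) (-1) m eC eC x heC heC hx
    rw [hMCc, map_zero, LinearMap.zero_apply, zero_sub, neg_one_mul, sign_neg', ← hs] at h1
    have h1' : cc eC (cc eC x) = -(s • (cc (cc eC x) eC - cc eC (cc x eC))) := by
      rw [← h1, neg_neg]
    have h2 := hpre_cl m (-1) (-1) x eC eC hx heC heC
    rw [hMCc, map_zero, sub_zero, show ((-1:ℤ) * -1) = 1 by ring, zpow_one,
      neg_one_smul] at h2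
    have hB : cc (cc x eC) eC = 0 := cancel_two' (k := k) h2
    simp only [dHcl, map_sub, map_smul, LinearMap.sub_apply, LinearMap.smul_apply,
      sign_sub_one', ← hs, h1', hB, smul_zero, sub_zero]
    module
  · -- (b)
    intro m α hα
    set s : k := (-1:k)^m with hs
    have hs2 : s * s = 1 := sign_sq' m
    have e1 := hpre_act m (-1) (-1) α eC eC hα heC heC
    rw [hMCc, map_zero, sub_zero, show ((-1:ℤ) * -1) = 1 by ring, zpow_one,
      neg_one_smul] at e1
    have e1' : oc (oc α eC) eC = 0 := cancel_two' (k := k) e1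
    have e2 := hcompat (-1) m (-1) eO α eC heO hα heC
    rw [neg_one_mul, sign_neg', ← hs] at e2
    have e3 := hcompat m (-1) (-1) α eO eC hα heO heC
    rw [show ((-1:ℤ) * -1) = 1 by ring, zpow_one, neg_one_smul] at e3
    have f1 : oo eO (oo eO α) = -(oo (oc eO eC) α) := by
      rw [← hassoc, e4, map_neg, LinearMap.neg_apply]
    simp only [dHop, sign_sub_one', ← hs, e1', e2, e3, f1, hassoc, e4,
      map_neg, map_add, map_smul, LinearMap.add_apply, LinearMap.neg_apply,
      LinearMap.smul_apply, smul_zero, smul_neg, smul_add, neg_smul,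
      smul_smul, hs2, one_smul, neg_neg, neg_add]
    match_scalars <;> first | ring1 | linear_combination hs2
  · -- (c)
    intro m x hx
    set s : k := (-1:k)^m with hs
    have g1 := hpre_act (-1) (-1) m eO eC x heO heC hx
    rw [neg_one_mul, sign_neg', ← hs] at g1
    have g1' : oc eO (cc eC x)
        = oc (oc eO eC) x - s • (oc (oc eO x) eC - oc eO (cc x eC)) := by
      rw [← g1]; abel
    have g2 := hcompat (-1) (-1) m eO eO x heO heO hx
    rw [mul_neg_one, sign_neg', ← hs, e4, map_neg, LinearMap.neg_apply] at g2
    have g2' : oo eO (oc eO x) = -(oc (oc eO eC) x) - s • oo (oc eO x) eO := by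
      rw [eq_sub_iff_add_eq, g2]; abel
    simp only [dHcl, dHop, sign_sub_one', ← hs, map_sub, map_smul, g1', g2',
      LinearMap.sub_apply, LinearMap.smul_apply]
    module
  · -- (d)
    intro m ψ h1 h2
    simp only [odot, dHcl, dHop, Prod.smul_mk, Prod.mk_sub_mk, Prod.mk.injEq]
    exact ⟨trivial, by module⟩
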